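/- arXiv:2311.16925 — 2 statements merged into one kernel-verified Lean document; each statement's English description precedes it below -/
import Mathlib

section
/- If genotypes g and h are distinct, then the column of W_0 indexed by g is orthogonal to the column of W_a indexed by h; and the inner product of the g-column of W_0 with the g-column of W_a equals m_1⋯m_n. -/
/-!
Both matrices are Kronecker products over the loci of the one-locus matrices
`μ(x, y)` and `1 - mᵢ ω(x, y)`, so the product `W₀ᵀ W_a` is the Kronecker product of the
one-locus products. At a single locus, the column of `μ` indexed by `g` sums to `m` when
`g = 0` and to `0` otherwise (one `+1` at `0`, one `-1` at `g`), and pairing it with the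
column of `ω` indexed by `h ≠ 0` picks out `μ(h, g)`; together these give `mᵢ · [g = h]`.
-/

open Finset
open scoped Matrix

def wronOmega {m : ℕ} [NeZero m] (x y : Fin m) : ℝ :=
  if x ≠ 0 ∧ x = y then 1 else 0

def wronMu {m : ℕ} [NeZero m] (x y : Fin m) : ℝ :=
  if x = 0 ∨ y = 0 then 1 else if x = y then -1 else 0

def Wa {n : ℕ} (m : Fin n → ℕ) [∀ i, NeZero (m i)] :
    Matrix (∀ i, Fin (m i)) (∀ i, Fin (m i)) ℝ :=
  fun g h => ∏ i, (1 - (m i : ℝ) * wronOmega (g i) (h i))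

def W0 {n : ℕ} (m : Fin n → ℕ) [∀ i, NeZero (m i)] :
    Matrix (∀ i, Fin (m i)) (∀ i, Fin (m i)) ℝ :=
  fun g h => ∏ i, wronMu (g i) (h i)

section OneLocus

variable {m : ℕ} [NeZero m]

lemma wronMu_zero_left (y : Fin m) : wronMu 0 y = 1 := by
  simp [wronMu]

lemma wronMu_zero_right (x : Fin m) : wronMu x 0 = 1 := by
  simp [wronMu]

lemma wronMu_of_ne_zero {x y : Fin m} (hx : x ≠ 0) (hy : y ≠ 0) :
    wronMu x y = if x = y then -1 else 0 := by
  simp [wronMu, hx, hy]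

lemma sum_wronMu_left (y : Fin m) :
    ∑ x, wronMu x y = if y = 0 then (m : ℝ) else 0 := by
  split_ifs with hy
  · simp [wronMu, hy]
  · have hsplit : ∀ x, wronMu x y = (if x = 0 then 1 else 0) + (if x = y then -1 else 0) := by
      intro x
      by_cases hx : x = 0
      · subst hx
        simp [wronMu_zero_left, Ne.symm hy]
      · simp [wronMu_of_ne_zero hx hy, hx]
    simp [hsplit, sum_add_distrib]

lemma sum_wronMu_mul_wronOmega (y z : Fin m) :
    ∑ x, wronMu x y * wronOmega x z = if z = 0 then 0 else wronMu z y := by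
  have hsingle : ∀ x, wronMu x y * wronOmega x z =
      if x = z then (if z = 0 then 0 else wronMu z y) else 0 := by
    intro x
    by_cases hxz : x = z
    · subst hxz
      by_cases hx : x = 0 <;> simp [wronOmega, hx]
    · simp [wronOmega, hxz]
  simp [hsingle]

lemma sum_wronMu_mul_one_sub_wronOmega (y z : Fin m) :
    ∑ x, wronMu x y * (1 - (m : ℝ) * wronOmega x z) = if y = z then (m : ℝ) else 0 := by
  have hexpand : ∀ x, wronMu x y * (1 - (m : ℝ) * wronOmega x z) =
      wronMu x y - (m : ℝ) * (wronMu x y * wronOmega x z) := fun x => by ring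
  simp only [hexpand, sum_sub_distrib, ← mul_sum, sum_wronMu_left, sum_wronMu_mul_wronOmega]
  by_cases hz : z = 0
  · subst hz
    simp
  by_cases hy : y = 0
  · subst hy
    simp [hz, Ne.symm hz, wronMu_zero_right]
  · by_cases hyz : y = z
    · subst hyz
      simp [hy, wronMu_of_ne_zero hy hy]
    · simp [hy, hz, hyz, wronMu_of_ne_zero hz hy, Ne.symm hyz]

end OneLocus

lemma transpose_W0_mul_Wa {n : ℕ} (m : Fin n → ℕ) [∀ i, NeZero (m i)] :
    (W0 m)ᵀ * Wa m = Matrix.diagonal fun _ => ∏ i, (m i : ℝ) := by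
  ext g h
  calc ((W0 m)ᵀ * Wa m) g h
      = ∑ x : ∀ i, Fin (m i),
          ∏ i, wronMu (x i) (g i) * (1 - (m i : ℝ) * wronOmega (x i) (h i)) := by
        simp only [Matrix.mul_apply, Matrix.transpose_apply, W0, Wa, prod_mul_distrib]
    _ = ∏ i, ∑ x, wronMu x (g i) * (1 - (m i : ℝ) * wronOmega x (h i)) :=
        (Fintype.prod_sum fun i x => wronMu x (g i) * (1 - (m i : ℝ) * wronOmega x (h i))).symm
    _ = ∏ i, if g i = h i then (m i : ℝ) else 0 := by
        simp only [sum_wronMu_mul_one_sub_wronOmega]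
    _ = _ := by
        simp only [Fintype.prod_ite_zero, Matrix.diagonal_apply, ← funext_iff]

theorem W0_Wa_columns_biorthogonal {n : ℕ} (m : Fin n → ℕ) [∀ i, NeZero (m i)]
    (g h : ∀ i, Fin (m i)) :
    (g ≠ h → ∑ x : ∀ i, Fin (m i), W0 m x g * Wa m x h = 0) ∧
    ∑ x : ∀ i, Fin (m i), W0 m x g * Wa m x g = ∏ i, (m i : ℝ) := by
  have hcol : ∀ k, ∑ x : ∀ i, Fin (m i), W0 m x g * Wa m x k = ((W0 m)ᵀ * Wa m) g k :=
    fun k => by simp only [Matrix.mul_apply, Matrix.transpose_apply]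
  refine ⟨fun hgh => ?_, ?_⟩
  · rw [hcol, transpose_W0_mul_Wa, Matrix.diagonal_apply_ne _ hgh]
  · rw [hcol, transpose_W0_mul_Wa, Matrix.diagonal_apply_eq]
end

section
/- Every additive fitness landscape lies in the span of the columns of W_a indexed by genotypes of degree at most 1. That is, if v : (∏_{i=1}^n Fin m_i) → ℝ satisfies v(g) = Σ_{i=1}^n φ(i, g_i) for some function φ, then when v is expanded in the basis of columns of W_a, the coefficient at every genotype of degree ≥ 2 is zero. -/
def deg {n : ℕ} {m : Fin n → ℕ} [∀ i, NeZero (m i)] (g : ∀ i, Fin (m i)) : ℕ :=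
  (Finset.univ.filter fun i => g i ≠ 0).card

/-!
The row of `W0` at `g` is the product kernel `h ↦ ∏ i, μ(g i, h i)`, and `μ(x, ·)` sums to zero
when `x ≠ 0` (`+1` at `0`, `-1` at `x`). Paired with a function of the single coordinate `h j`,
the kernel sums independently over each `i ≠ j`; as `deg g ≥ 2`, some such `i` has `g i ≠ 0`,
so the sum vanishes. An additive landscape is a sum of such functions.
-/

open Finset

lemma wronMu_eq_ite {m : ℕ} [NeZero m] {x : Fin m} (hx : x ≠ 0) (y : Fin m) :
    wronMu x y = (if y = 0 then 1 else 0) + (if y = x then -1 else 0) := by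
  by_cases hy : y = 0
  · subst hy
    simp [wronMu, Ne.symm hx]
  · simp [wronMu, hx, hy, eq_comm]

lemma sum_wronMu_eq_zero {m : ℕ} [NeZero m] {x : Fin m} (hx : x ≠ 0) :
    ∑ y, wronMu x y = 0 := by
  simp [wronMu_eq_ite hx, sum_add_distrib]

lemma sum_prod_mul_apply_eq_zero {ι R : Type*} [Fintype ι] [DecidableEq ι] [CommSemiring R]
    {β : ι → Type*} [∀ i, Fintype (β i)] (K f : ∀ i, β i → R) {i₀ j : ι} (hi₀j : i₀ ≠ j)
    (hK : ∑ y, K i₀ y = 0) :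
    ∑ h : ∀ i, β i, (∏ i, K i (h i)) * f j (h j) = 0 := by
  have hfactor : ∀ h : ∀ i, β i, (∏ i, K i (h i)) * f j (h j)
      = ∏ i, K i (h i) * (if i = j then f i (h i) else 1) := fun h => by
    rw [prod_mul_distrib, Fintype.prod_ite_eq']
  rw [Fintype.sum_congr _ _ hfactor,
    ← Fintype.prod_sum fun i y => K i y * if i = j then f i y else 1]
  exact prod_eq_zero (mem_univ i₀) (by simpa [hi₀j] using hK)

lemma exists_ne_of_two_le_deg {n : ℕ} {m : Fin n → ℕ} [∀ i, NeZero (m i)]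
    {g : ∀ i, Fin (m i)} (hg : 2 ≤ deg g) (j : Fin n) : ∃ i, i ≠ j ∧ g i ≠ 0 := by
  obtain ⟨i, hi, hij⟩ := exists_mem_ne hg j
  exact ⟨i, hij, (mem_filter.mp hi).2⟩

theorem additive_coeffs_vanish_general {n : ℕ} (m : Fin n → ℕ)
    [∀ i, NeZero (m i)] (v : (∀ i, Fin (m i)) → ℝ)
    (φ : (i : Fin n) → Fin (m i) → ℝ)
    (hv : ∀ g, v g = ∑ i, φ i (g i)) :
    ∀ g : ∀ i, Fin (m i), 2 ≤ deg g →
      (∏ i, (m i : ℝ))⁻¹ * (W0 m).mulVec v g = 0 := by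
  intro g hg
  suffices h : (W0 m).mulVec v g = 0 by rw [h, mul_zero]
  simp only [Matrix.mulVec, dotProduct, W0, hv, mul_sum]
  rw [sum_comm]
  refine sum_eq_zero fun j _ => ?_
  obtain ⟨i₀, hi₀j, hgi₀⟩ := exists_ne_of_two_le_deg hg j
  exact sum_prod_mul_apply_eq_zero (fun i => wronMu (g i)) φ hi₀j (sum_wronMu_eq_zero hgi₀)

theorem additive_coeffs_vanish {n : ℕ} (hn : 1 ≤ n) (m : Fin n → ℕ)
    [∀ i, NeZero (m i)] (v : (∀ i, Fin (m i)) → ℝ)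
    (φ : (i : Fin n) → Fin (m i) → ℝ)
    (hv : ∀ g, v g = ∑ i, φ i (g i)) :
    ∀ g : ∀ i, Fin (m i), 2 ≤ deg g →
      (∏ i, (m i : ℝ))⁻¹ * (W0 m).mulVec v g = 0 :=
  additive_coeffs_vanish_general m v φ hv
end
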